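/- arXiv:1609.03660 — 3 statements merged into one kernel-verified Lean document; each statement's English description precedes it below -/
import Mathlib

section
/- Let p be an odd prime and let q be a complex number with |q| < 1. Then F(q^{p²}) · ∏_{k=0}^{p−1} F(ζ_p^k · q) = F(q^p)^{p+1}, where ζ_p = e^{2πi/p}. -/
/-!
Exchanging the finite product over `k` with the infinite product, the `m`-th factors combine to
`∏ₖ (1 - (ζᵏ q)ᵐ)`, which is `(1 - qᵐ)ᵖ` when `p ∣ m` and `1 - q^{pm}` otherwise (then `ζᵐ` is
again a primitive `p`-th root of unity). Splitting `F(q^p) = ∏ₘ (1 - q^{pm})` along the same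
dichotomy gives `F(q^p) = F(q^{p²}) · ∏_{p ∤ m} (1 - q^{pm})`, and the two computations combine.
-/

open Complex

/-- F(q) = ∏_{ℓ=1}^∞ (1 − q^ℓ). -/
noncomputable def Fprod (q : ℂ) : ℂ := ∏' ℓ : ℕ, (1 - q ^ (ℓ + 1))

theorem IsPrimitiveRoot.prod_range_one_sub_pow_mul {R : Type*} [CommRing R] [IsDomain R]
    {ζ : R} {n : ℕ} (hζ : IsPrimitiveRoot ζ n) (hn : 0 < n) (x : R) :
    ∏ k ∈ Finset.range n, (1 - ζ ^ k * x) = 1 - x ^ n := by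
  simpa [Polynomial.eval_prod] using
    (congrArg (Polynomial.eval 1) (X_pow_sub_C_eq_prod hζ hn (α := x) rfl)).symm

theorem IsPrimitiveRoot.prod_range_one_sub_mul_pow_of_coprime {R : Type*} [CommRing R]
    [IsDomain R] {ζ : R} {n m : ℕ} (hζ : IsPrimitiveRoot ζ n) (hn : 0 < n) (hm : m.Coprime n)
    (x : R) : ∏ k ∈ Finset.range n, (1 - (ζ ^ k * x) ^ m) = 1 - (x ^ n) ^ m := by
  simp_rw [mul_pow, ← pow_mul, mul_comm _ m, pow_mul]
  rw [(hζ.pow_of_coprime m hm).prod_range_one_sub_pow_mul hn]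

theorem multipliable_one_sub_pow_subtype {q : ℂ} (hq : ‖q‖ < 1) (s : Set ℕ) :
    Multipliable fun ℓ : s ↦ 1 - q ^ ((ℓ : ℕ) + 1) := by
  have hsum : Summable fun ℓ : ℕ ↦ -q ^ (ℓ + 1) := by
    simpa [pow_succ] using ((summable_geometric_of_norm_lt_one hq).mul_right q).neg
  simp_rw [sub_eq_add_neg]
  exact Complex.multipliable_one_add_of_summable (hsum.subtype s)

theorem range_mul_add_pred {p : ℕ} (hp : 0 < p) :
    Set.range (fun n ↦ p * n + (p - 1)) = {ℓ : ℕ | p ∣ ℓ + 1} := by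
  ext ℓ
  constructor
  · rintro ⟨n, rfl⟩
    exact ⟨n + 1, by rw [add_assoc, Nat.sub_add_cancel hp, mul_add_one]⟩
  · rintro ⟨c, hc⟩
    obtain ⟨n, rfl⟩ : ∃ n, c = n + 1 :=
      Nat.exists_eq_add_one.mpr (Nat.pos_of_ne_zero (by rintro rfl; simp at hc))
    refine ⟨n, show p * n + (p - 1) = ℓ by rw [mul_add_one] at hc; omega⟩

theorem tprod_setOf_dvd_add_one {α : Type*} [CommMonoid α] [TopologicalSpace α] {p : ℕ}
    (hp : 0 < p) (f : ℕ → α) :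
    ∏' ℓ : {ℓ : ℕ | p ∣ ℓ + 1}, f ℓ = ∏' n, f (p * n + (p - 1)) := by
  have hinj : Function.Injective fun n ↦ p * n + (p - 1) := fun a b h ↦ by
    simpa [hp.ne'] using h
  rw [← range_mul_add_pred hp]
  exact tprod_range f hinj

theorem tprod_setOf_dvd_add_one_one_sub_pow {p : ℕ} (hp : 0 < p) (x : ℂ) :
    ∏' ℓ : {ℓ : ℕ | p ∣ ℓ + 1}, (1 - x ^ ((ℓ : ℕ) + 1)) = Fprod (x ^ p) := by
  rw [tprod_setOf_dvd_add_one hp fun ℓ ↦ 1 - x ^ (ℓ + 1), Fprod]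
  refine tprod_congr fun n ↦ ?_
  rw [add_assoc, Nat.sub_add_cancel hp, ← mul_add_one, pow_mul]

theorem Fprod_eq_Fprod_pow_mul_tprod_compl {p : ℕ} (hp : 0 < p) {x : ℂ} (hx : ‖x‖ < 1) :
    Fprod x = Fprod (x ^ p) * ∏' ℓ : ↥{ℓ : ℕ | p ∣ ℓ + 1}ᶜ, (1 - x ^ ((ℓ : ℕ) + 1)) := by
  rw [← tprod_setOf_dvd_add_one_one_sub_pow hp]
  exact (Multipliable.tprod_mul_tprod_compl (f := fun ℓ : ℕ ↦ 1 - x ^ (ℓ + 1))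
    (multipliable_one_sub_pow_subtype hx _) (multipliable_one_sub_pow_subtype hx _)).symm

theorem prod_Fprod_rootOfUnity_mul {p : ℕ} (hp : p.Prime) {ζ : ℂ} (hζ : IsPrimitiveRoot ζ p)
    {q : ℂ} (hq : ‖q‖ < 1) :
    ∏ k ∈ Finset.range p, Fprod (ζ ^ k * q) =
      Fprod (q ^ p) ^ p * ∏' ℓ : ↥{ℓ : ℕ | p ∣ ℓ + 1}ᶜ, (1 - (q ^ p) ^ ((ℓ : ℕ) + 1)) := by
  have hζq (k : ℕ) : ‖ζ ^ k * q‖ < 1 := by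
    rwa [norm_mul, norm_pow, hζ.norm'_eq_one hp.ne_zero, one_pow, one_mul]
  have hqp : ‖q ^ p‖ < 1 := by simpa using pow_lt_one₀ (norm_nonneg q) hq hp.ne_zero
  set G : ℕ → ℂ := fun ℓ ↦ ∏ k ∈ Finset.range p, (1 - (ζ ^ k * q) ^ (ℓ + 1))
  have hG_dvd (ℓ : {ℓ : ℕ | p ∣ ℓ + 1}) : G ℓ = (1 - q ^ ((ℓ : ℕ) + 1)) ^ p := by
    have hζℓ : ζ ^ ((ℓ : ℕ) + 1) = 1 := (hζ.pow_eq_one_iff_dvd _).mpr ℓ.2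
    simp_rw [G, mul_pow, ← pow_mul, mul_comm _ ((ℓ : ℕ) + 1), pow_mul, hζℓ, one_pow, one_mul,
      Finset.prod_const, Finset.card_range]
  have hG_not_dvd (ℓ : ↥{ℓ : ℕ | p ∣ ℓ + 1}ᶜ) : G ℓ = 1 - (q ^ p) ^ ((ℓ : ℕ) + 1) :=
    hζ.prod_range_one_sub_mul_pow_of_coprime hp.pos ((hp.coprime_iff_not_dvd.mpr ℓ.2).symm) q
  have hS : Multipliable fun ℓ : {ℓ : ℕ | p ∣ ℓ + 1} ↦ G ℓ :=
    ((multipliable_one_sub_pow_subtype hq _).pow p).congr fun ℓ ↦ (hG_dvd ℓ).symm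
  have hSc : Multipliable fun ℓ : ↥{ℓ : ℕ | p ∣ ℓ + 1}ᶜ ↦ G ℓ :=
    (multipliable_one_sub_pow_subtype hqp _).congr fun ℓ ↦ (hG_not_dvd ℓ).symm
  calc ∏ k ∈ Finset.range p, Fprod (ζ ^ k * q)
      = ∏' ℓ, G ℓ := by
        simp only [Fprod, G]
        exact ((Multipliable.tprod_finsetProd fun k _ ↦
          ModularForm.multipliable_one_sub_pow (hζq k))).symm
    _ = (∏' ℓ : {ℓ : ℕ | p ∣ ℓ + 1}, (1 - q ^ ((ℓ : ℕ) + 1))) ^ p *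
          ∏' ℓ : ↥{ℓ : ℕ | p ∣ ℓ + 1}ᶜ, (1 - (q ^ p) ^ ((ℓ : ℕ) + 1)) := by
        rw [← Multipliable.tprod_mul_tprod_compl (f := G) hS hSc, tprod_congr hG_dvd,
          tprod_congr hG_not_dvd, (multipliable_one_sub_pow_subtype hq _).tprod_pow]
    _ = _ := by rw [tprod_setOf_dvd_add_one_one_sub_pow hp.pos]

theorem stmt_12_general (p : ℕ) (hp : p.Prime) (q : ℂ) (hq : ‖q‖ < 1) :
    Fprod (q ^ p ^ 2) *
      ∏ k ∈ Finset.range p,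
        Fprod (Complex.exp (2 * Real.pi * Complex.I / (p : ℂ)) ^ k * q)
      = Fprod (q ^ p) ^ (p + 1) := by
  have hqp : ‖q ^ p‖ < 1 := by simpa using pow_lt_one₀ (norm_nonneg q) hq hp.ne_zero
  have hsplit := Fprod_eq_Fprod_pow_mul_tprod_compl hp.pos hqp
  rw [← pow_mul, ← sq] at hsplit
  rw [prod_Fprod_rootOfUnity_mul hp (Complex.isPrimitiveRoot_exp p hp.ne_zero) hq]
  linear_combination -Fprod (q ^ p) ^ p * hsplit

theorem stmt_12 (p : ℕ) (hp : p.Prime) (hodd : Odd p) (q : ℂ) (hq : ‖q‖ < 1) :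
    Fprod (q ^ p ^ 2) *
      ∏ k ∈ Finset.range p,
        Fprod (Complex.exp (2 * Real.pi * Complex.I / (p : ℂ)) ^ k * q)
      = Fprod (q ^ p) ^ (p + 1) :=
  stmt_12_general p hp q hq
end

section
/- Let n ≥ 1 be an integer. Then the number of triplets (u, v, w) of nonnegative integers satisfying gcd(u, v, w) = 1, u·w = n, and 0 ≤ v < w, equals ψ(n) = n · ∏_{p | n} (1 + 1/p); equivalently, ∑_{w | n} ω(n/w, w) = ψ(n). -/
/-!
Grouping the triples by `w` gives `∑_{w ∣ n} ω(n/w, w)`. Since `gcd(a, b, k) = 1` says that `k` is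
coprime to `g = gcd(a, b)`, a condition of period `g` in `k`, we get `ω(a, b) = (b/g)·φ(g)`. Hence
`ω(a₁a₂, b₁b₂) = ω(a₁, b₁)·ω(a₂, b₂)` when `a₁b₁` and `a₂b₂` are coprime, and the divisor sum is
multiplicative in `n`. At `n = p^(k+1)` its terms are `1`, then `p^j - p^(j-1)` for `0 < j ≤ k`,
then `p^(k+1)`, which telescope to `p^(k+1) + p^k = ψ(p^(k+1))`.
-/

/-- ω(a, b) = #{k : 0 ≤ k < b, gcd(a, b, k) = 1}. -/
def omegaE (a b : ℕ) : ℕ :=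
  ((Finset.range b).filter (fun k => Nat.gcd a (Nat.gcd b k) = 1)).card

open Finset

theorem Function.Periodic.count_mul {p : ℕ → Prop} [DecidablePred p] {d : ℕ}
    (hp : Function.Periodic p d) (m : ℕ) : Nat.count p (d * m) = m * Nat.count p d := by
  induction m with
  | zero => simp
  | succ m ih =>
    have hshift : (fun k ↦ p (d * m + k)) = p := funext fun k ↦ by
      rw [add_comm, mul_comm]; exact hp.nat_mul m k
    rw [mul_add_one, Nat.count_add, ih, add_one_mul]
    simp only [hshift]

theorem Nat.count_coprime_mul (d m : ℕ) : count (Coprime d) (d * m) = m * totient d := by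
  rw [(periodic_coprime d).count_mul, totient_eq_card_coprime, count_eq_card_filter_range]

theorem omegaE_eq_count (a b : ℕ) : omegaE a b = Nat.count (Nat.Coprime (Nat.gcd a b)) b := by
  simp only [omegaE, Nat.count_eq_card_filter_range, Nat.Coprime, Nat.gcd_assoc]

theorem omegaE_eq_div_mul_totient (a b : ℕ) :
    omegaE a b = b / Nat.gcd a b * Nat.totient (Nat.gcd a b) := by
  rw [omegaE_eq_count, ← Nat.count_coprime_mul, Nat.mul_div_cancel' (Nat.gcd_dvd_right a b)]

theorem omegaE_mul_mul {a₁ a₂ b₁ b₂ : ℕ} (h : Nat.Coprime (a₁ * b₁) (a₂ * b₂)) :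
    omegaE (a₁ * a₂) (b₁ * b₂) = omegaE a₁ b₁ * omegaE a₂ b₂ := by
  have hb : Nat.Coprime b₁ b₂ := h.coprime_mul_left.coprime_mul_left_right
  have hgcd : Nat.gcd (a₁ * a₂) (b₁ * b₂) = Nat.gcd a₁ b₁ * Nat.gcd a₂ b₂ := by
    rw [hb.gcd_mul,
      Nat.Coprime.gcd_mul_right_cancel a₁ h.coprime_mul_left.coprime_mul_right_right.symm,
      Nat.Coprime.gcd_mul_left_cancel a₂ h.coprime_mul_right.coprime_mul_left_right]
  have hg : Nat.Coprime (Nat.gcd a₁ b₁) (Nat.gcd a₂ b₂) :=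
    hb.coprime_dvd_left (Nat.gcd_dvd_right _ _) |>.coprime_dvd_right (Nat.gcd_dvd_right _ _)
  simp only [omegaE_eq_div_mul_totient]
  rw [hgcd, Nat.totient_mul hg,
    ← Nat.div_mul_div_comm (Nat.gcd_dvd_right _ _) (Nat.gcd_dvd_right _ _)]
  ring

theorem omegaE_one_left (b : ℕ) : omegaE 1 b = b := by simp [omegaE]

theorem omegaE_one_right (a : ℕ) : omegaE a 1 = 1 := by simp [omegaE]

theorem omegaE_prime_pow_succ {p : ℕ} (hp : p.Prime) (i j : ℕ) :
    omegaE (p ^ (i + 1)) (p ^ (j + 1)) = p ^ (j + 1) - p ^ j := by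
  have hcop (k : ℕ) : Nat.gcd (p ^ (i + 1)) (Nat.gcd (p ^ (j + 1)) k) = 1 ↔ Nat.Coprime p k := by
    rw [← Nat.Coprime, Nat.coprime_pow_left_iff i.succ_pos, hp.coprime_iff_not_dvd,
      hp.coprime_iff_not_dvd, Nat.dvd_gcd_iff]
    simp [dvd_pow_self p j.succ_ne_zero]
  rw [omegaE, filter_congr fun k _ ↦ hcop k, ← Nat.count_eq_card_filter_range, pow_succ',
    Nat.count_coprime_mul, Nat.totient_prime hp, Nat.mul_sub_one, mul_comm]

theorem Nat.Coprime.sum_divisors_mul_eq {M : Type*} [AddCommMonoid M] {m n : ℕ}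
    (hmn : m.Coprime n) (f : ℕ → M) :
    ∑ w ∈ (m * n).divisors, f w = ∑ d ∈ m.divisors ×ˢ n.divisors, f (d.1 * d.2) := by
  rw [hmn.divisors_mul, sum_map]
  exact sum_attach (m.divisors ×ˢ n.divisors) fun d ↦ f (d.1 * d.2)

def omegaDivisorSum (n : ℕ) : ℕ := ∑ w ∈ n.divisors, omegaE (n / w) w

theorem omegaDivisorSum_mul {m n : ℕ} (hmn : m.Coprime n) :
    omegaDivisorSum (m * n) = omegaDivisorSum m * omegaDivisorSum n := by
  rw [omegaDivisorSum, omegaDivisorSum, omegaDivisorSum, hmn.sum_divisors_mul_eq, sum_mul_sum,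
    ← sum_product']
  refine sum_congr rfl fun d hd ↦ ?_
  obtain ⟨⟨hd₁, -⟩, ⟨hd₂, -⟩⟩ : (d.1 ∣ m ∧ m ≠ 0) ∧ (d.2 ∣ n ∧ n ≠ 0) := by
    simpa only [mem_product, Nat.mem_divisors] using hd
  rw [← Nat.div_mul_div_comm hd₁ hd₂, omegaE_mul_mul]
  rwa [Nat.div_mul_cancel hd₁, Nat.div_mul_cancel hd₂]

theorem omegaDivisorSum_prime_pow_succ {p : ℕ} (hp : p.Prime) (k : ℕ) :
    omegaDivisorSum (p ^ (k + 1)) = p ^ (k + 1) + p ^ k := by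
  have hmid : ∑ j ∈ range k, omegaE (p ^ (k + 1) / p ^ (j + 1)) (p ^ (j + 1)) = p ^ k - p ^ 0 := by
    rw [← sum_range_tsub (pow_right_mono₀ hp.one_le)]
    refine sum_congr rfl fun j hj ↦ ?_
    have hjk := mem_range.1 hj
    rw [Nat.pow_div (by omega) hp.pos, show k + 1 - (j + 1) = k - j - 1 + 1 by omega,
      omegaE_prime_pow_succ hp]
  rw [omegaDivisorSum, Nat.sum_divisors_prime_pow hp, sum_range_succ', sum_range_succ, hmid,
    Nat.div_self (pow_pos hp.pos _), omegaE_one_left, pow_zero, Nat.div_one, omegaE_one_right]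
  have := Nat.one_le_pow k p hp.pos
  omega

theorem cast_omegaDivisorSum {n : ℕ} (hn : n ≠ 0) :
    (omegaDivisorSum n : ℚ) = n * ∏ p ∈ n.primeFactors, (1 + 1 / (p : ℚ)) := by
  induction n using Nat.recOnPosPrimePosCoprime with
  | prime_pow p k hp hk =>
    obtain ⟨k, rfl⟩ := Nat.exists_eq_add_of_lt hk
    have hp0 : (p : ℚ) ≠ 0 := by exact_mod_cast hp.ne_zero
    rw [Nat.primeFactors_prime_pow (by omega) hp, prod_singleton, zero_add,
      omegaDivisorSum_prime_pow_succ hp]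
    push_cast
    field_simp
    ring
  | zero => exact absurd rfl hn
  | one => simp [omegaDivisorSum, omegaE_one_left]
  | coprime a b _ _ hab iha ihb =>
    have ha : a ≠ 0 := by rintro rfl; simp at hn
    have hb : b ≠ 0 := by rintro rfl; simp at hn
    rw [omegaDivisorSum_mul hab, Nat.cast_mul, iha ha, ihb hb, Nat.primeFactors_mul ha hb,
      prod_union hab.disjoint_primeFactors]
    push_cast
    ring

theorem card_triples_eq_omegaDivisorSum {n : ℕ} (hn : n ≠ 0) :
    ((range (n + 1) ×ˢ range (n + 1) ×ˢ range (n + 1)).filter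
        (fun t : ℕ × ℕ × ℕ =>
          Nat.gcd t.1 (Nat.gcd t.2.1 t.2.2) = 1 ∧ t.1 * t.2.2 = n ∧ t.2.1 < t.2.2)).card =
      omegaDivisorSum n := by
  rw [card_eq_sum_card_fiberwise (f := fun t ↦ t.2.2) (t := n.divisors) fun t ht ↦ by
    simp only [coe_filter, Set.mem_ofPred_eq] at ht
    exact Nat.mem_divisors.2 ⟨Dvd.intro_left _ ht.2.2.1, hn⟩]
  refine sum_congr rfl fun w hw ↦ ?_
  obtain ⟨hwn, -⟩ := Nat.mem_divisors.1 hw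
  have hw0 : 0 < w := Nat.pos_of_dvd_of_pos hwn (Nat.pos_of_ne_zero hn)
  have hwle : w ≤ n := Nat.le_of_dvd (Nat.pos_of_ne_zero hn) hwn
  have hmul_iff : ∀ u, u * w = n ↔ u = n / w := fun u ↦ by
    constructor
    · rintro rfl; exact (Nat.mul_div_cancel u hw0).symm
    · rintro rfl; exact Nat.div_mul_cancel hwn
  refine card_nbij' (fun t ↦ t.2.1) (fun v ↦ (n / w, v, w)) ?_ ?_ ?_ ?_
  · rintro ⟨u, v, w'⟩ ht
    simp only [coe_filter, mem_filter, mem_product, mem_range, Set.mem_ofPred_eq] at ht ⊢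
    obtain ⟨⟨-, hgcd, hmul, hlt⟩, rfl⟩ := ht
    obtain rfl := (hmul_iff u).1 hmul
    exact ⟨hlt, by rwa [Nat.gcd_comm w']⟩
  · intro v hv
    simp only [coe_filter, mem_filter, mem_product, mem_range, Set.mem_ofPred_eq] at hv ⊢
    have hdiv := Nat.div_le_self n w
    exact ⟨⟨⟨by omega, by omega, by omega⟩, by rw [Nat.gcd_comm v]; exact hv.2,
      (hmul_iff _).2 rfl, hv.1⟩, trivial⟩
  · rintro ⟨u, v, w'⟩ ht
    simp only [coe_filter, mem_filter, mem_product, mem_range, Set.mem_ofPred_eq] at ht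
    obtain ⟨⟨-, -, hmul, -⟩, rfl⟩ := ht
    rw [(hmul_iff u).1 hmul]
  · intro v _
    rfl

/-- The number of triplets (u,v,w) of nonnegative integers with gcd(u,v,w) = 1, u·w = n and
0 ≤ v < w equals ψ(n) = n·∏_{p | n}(1 + 1/p); equivalently ∑_{w | n} ω(n/w, w) = ψ(n). -/
theorem stmt_17 (n : ℕ) (hn : 1 ≤ n)
    (k : ℕ) (hk : (k : ℚ) = n * ∏ p ∈ n.primeFactors, (1 + 1 / (p : ℚ))) :
    ((Finset.range (n + 1) ×ˢ Finset.range (n + 1) ×ˢ Finset.range (n + 1)).filter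
        (fun t : ℕ × ℕ × ℕ =>
          Nat.gcd t.1 (Nat.gcd t.2.1 t.2.2) = 1 ∧ t.1 * t.2.2 = n ∧ t.2.1 < t.2.2)).card = k ∧
    ∑ w ∈ n.divisors, omegaE (n / w) w = k := by
  have hn0 : n ≠ 0 := Nat.one_le_iff_ne_zero.1 hn
  have hsum : omegaDivisorSum n = k := by
    exact_mod_cast (cast_omegaDivisorSum hn0).trans hk.symm
  exact ⟨(card_triples_eq_omegaDivisorSum hn0).trans hsum, hsum⟩
end

section
/- Let p be an odd prime and α ≥ 1 an integer. Then ∏_{d | p^α} d^{ω(d, p^α/d)} = p^{(p^α − 1)/(p − 1)}; consequently, the square of this product equals p^{2(p^α − 1)/(p − 1)}. -/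
open Finset

lemma omegaE_eq_totient {a b : ℕ} (h : b.primeFactors ⊆ a.primeFactors) :
    omegaE a b = b.totient := by
  rw [omegaE, Nat.totient]
  refine congrArg card (filter_congr fun k hk => ⟨fun hcop => ?_, fun hcop => ?_⟩)
  · have hb : b ≠ 0 := by rintro rfl; simp at hk
    have hsub : (b.gcd k).primeFactors ⊆ a.primeFactors :=
      (Nat.primeFactors_mono (Nat.gcd_dvd_left b k) hb).trans h
    have hempty : (b.gcd k).primeFactors = ∅ :=
      disjoint_self_iff_empty _ |>.mp <|
        (Nat.Coprime.disjoint_primeFactors hcop).symm.mono_right hsub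
    exact (Nat.primeFactors_eq_empty.mp hempty).resolve_left (Nat.gcd_ne_zero_left hb)
  · rw [Nat.Coprime.gcd_eq_one hcop, Nat.gcd_one_right]

lemma omegaE_pow_pow (n : ℕ) {i : ℕ} (hi : i ≠ 0) (m : ℕ) :
    omegaE (n ^ i) (n ^ m) = (n ^ m).totient := by
  apply omegaE_eq_totient
  rw [Nat.primeFactors_pow n hi]
  rcases Nat.eq_zero_or_pos m with rfl | hm
  · simp
  · rw [Nat.primeFactors_pow n hm.ne']

lemma sum_range_totient_prime_pow {p : ℕ} (hp : p.Prime) (m : ℕ) :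
    ∑ j ∈ range (m + 1), (p ^ j).totient = p ^ m := by
  rw [← Nat.sum_totient (p ^ m), Nat.divisors_prime_pow hp, sum_map]
  rfl

lemma sum_range_mul_totient_prime_pow {p : ℕ} (hp : p.Prime) (m : ℕ) :
    ∑ i ∈ range (m + 1), i * (p ^ (m - i)).totient = ∑ j ∈ range m, p ^ j := by
  induction m with
  | zero => simp
  | succ m ih =>
    have hreflect : ∑ i ∈ range (m + 1), (p ^ (m - i)).totient = p ^ m := by
      simpa only [add_tsub_cancel_right] using
        (sum_range_reflect (fun j => (p ^ j).totient) (m + 1)).trans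
          (sum_range_totient_prime_pow hp m)
    calc ∑ i ∈ range (m + 1 + 1), i * (p ^ (m + 1 - i)).totient
        = ∑ i ∈ range (m + 1), (i + 1) * (p ^ (m - i)).totient := by
          rw [sum_range_succ']; simp
      _ = ∑ i ∈ range (m + 1), i * (p ^ (m - i)).totient
            + ∑ i ∈ range (m + 1), (p ^ (m - i)).totient := by
          simp only [add_mul, one_mul, sum_add_distrib]
      _ = ∑ j ∈ range (m + 1), p ^ j := by rw [ih, hreflect, sum_range_succ]

lemma pow_pow_omegaE_prime_pow {p : ℕ} (hp : p.Prime) {i α : ℕ} (hi : i ≤ α) :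
    (p ^ i) ^ omegaE (p ^ i) (p ^ α / p ^ i) = p ^ (i * (p ^ (α - i)).totient) := by
  rcases Nat.eq_zero_or_pos i with rfl | hi0
  · simp
  · rw [Nat.pow_div hi hp.pos, omegaE_pow_pow p hi0.ne', pow_mul]

lemma prod_divisors_prime_pow_pow_omegaE {p : ℕ} (hp : p.Prime) (α : ℕ) :
    ∏ d ∈ (p ^ α).divisors, d ^ omegaE d (p ^ α / d) = p ^ ((p ^ α - 1) / (p - 1)) := by
  rw [Nat.divisors_prime_pow hp, prod_map, ← Nat.geomSum_eq hp.two_le,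
    ← sum_range_mul_totient_prime_pow hp, ← prod_pow_eq_pow_sum]
  exact prod_congr rfl fun i hi =>
    pow_pow_omegaE_prime_pow hp (Nat.lt_succ_iff.mp (mem_range.mp hi))

theorem stmt_18_general (p : ℕ) (hp : p.Prime) (α : ℕ) :
    (∏ d ∈ (p ^ α).divisors, d ^ omegaE d (p ^ α / d)) = p ^ ((p ^ α - 1) / (p - 1)) ∧
    (∏ d ∈ (p ^ α).divisors, d ^ omegaE d (p ^ α / d)) ^ 2
      = p ^ (2 * ((p ^ α - 1) / (p - 1))) := by
  have hprod := prod_divisors_prime_pow_pow_omegaE hp α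
  exact ⟨hprod, by rw [hprod, ← pow_mul, mul_comm]⟩

theorem stmt_18 (p : ℕ) (hp : p.Prime) (hodd : Odd p) (α : ℕ) (hα : 1 ≤ α) :
    (∏ d ∈ (p ^ α).divisors, d ^ omegaE d (p ^ α / d)) = p ^ ((p ^ α - 1) / (p - 1)) ∧
    (∏ d ∈ (p ^ α).divisors, d ^ omegaE d (p ^ α / d)) ^ 2
      = p ^ (2 * ((p ^ α - 1) / (p - 1))) :=
  stmt_18_general p hp α
end
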